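/- Error bound via rational approximation: let A ∈ ℝ^{n×n} and T ∈ ℝ^{2m×2m} satisfy ‖g(A)‖ ≤ C‖g‖_{L∞(Λ)} and ‖g(T)‖ ≤ C‖g‖_{L∞(Λ)} for all functions g analytic near a compact set Λ (Crouzeix-type bound), and suppose the exactness r(A)V̂ = ‖V̂‖_F V(r(T)e_1 ⊗ I_p) holds for all rationals r ∈ Π_{2m−1}/q_m. Then with f_2m = ‖V̂‖_F V(f(T)e_1 ⊗ I_p), one has ‖f(A)V̂ − f_2m‖_F ≤ 2C‖V̂‖_F · min over r ∈ Π_{2m−1}/q_m of ‖f − r‖_{L∞(Λ)}, for any f analytic near Λ, assuming additionally that the blocks V_i are F-orthonormal so that ‖V(y ⊗ I_p)‖_F = ‖y‖_2 for all y ∈ ℝ^{2m}. -/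

import Mathlib

open Matrix BigOperators Polynomial

/-- Frobenius inner product `⟨X,Y⟩_F = trace(Yᵀ X)`. -/
noncomputable def finner {a b : ℕ} (X Y : Matrix (Fin a) (Fin b) ℝ) : ℝ :=
  Matrix.trace (Yᵀ * X)

/-- Frobenius norm. -/
noncomputable def fnorm {a b : ℕ} (X : Matrix (Fin a) (Fin b) ℝ) : ℝ :=
  Real.sqrt (finner X X)

/-- `L∞(Λ)` error of the rational approximant `pol/q_m` to `f`. -/
noncomputable def supErr {m : ℕ} (Λ : Set ℝ) (f : ℝ → ℝ) (ss : Fin m → ℝ)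
    (pol : Polynomial ℝ) : ℝ :=
  sSup ((fun x => |f x - Polynomial.eval x pol / ∏ i, (x - ss i)|) '' Λ)

/-!
Let `r` be any admissible rational function. By exactness, `f(A)V̂ − f_{2m}` splits as
`(f − r)(A) V̂ + ‖V̂‖_F V((r − f)(T)e₁ ⊗ I_p)`. The first term has Frobenius norm at most
`‖(f − r)(A)‖ ‖V̂‖_F`; since the blocks `V i` are F-orthonormal, the second has norm `‖V̂‖_F` times
the Euclidean norm of the first column of `(r − f)(T)`, hence at most `‖V̂‖_F ‖(f − r)(T)‖`.
Both are bounded by `C ‖f − r‖_{L∞(Λ)} ‖V̂‖_F` and one takes the infimum over `r`.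
-/

attribute [local instance] Matrix.frobeniusNormedAddCommGroup Matrix.frobeniusNormSMulClass

open WithLp

lemma finner_self_eq_sum_sq {a b : ℕ} (X : Matrix (Fin a) (Fin b) ℝ) :
    finner X X = ∑ i, ∑ j, X i j ^ 2 := by
  simp only [finner, trace, diag, mul_apply, transpose_apply, sq]
  exact Finset.sum_comm

lemma fnorm_eq_norm {a b : ℕ} (X : Matrix (Fin a) (Fin b) ℝ) : fnorm X = ‖X‖ := by
  simp [fnorm, finner_self_eq_sum_sq, frobenius_norm_def, Real.sqrt_eq_rpow]

lemma finner_sum_smul_sum_smul {a b k : ℕ} {V : Fin k → Matrix (Fin a) (Fin b) ℝ}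
    (horth : ∀ i j, finner (V i) (V j) = if i = j then 1 else 0) (y z : Fin k → ℝ) :
    finner (∑ i, y i • V i) (∑ j, z j • V j) = ∑ i, y i * z i := by
  simp only [finner] at horth ⊢
  simp [transpose_sum, Matrix.sum_mul, Matrix.mul_sum, trace_sum, transpose_smul, smul_mul,
    trace_smul, horth]

lemma norm_sum_smul_of_orthonormal {a b k : ℕ} {V : Fin k → Matrix (Fin a) (Fin b) ℝ}
    (horth : ∀ i j, finner (V i) (V j) = if i = j then 1 else 0) (y : Fin k → ℝ) :
    ‖∑ i, y i • V i‖ = ‖toLp 2 y‖ := by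
  rw [← fnorm_eq_norm, fnorm, finner_sum_smul_sum_smul horth, EuclideanSpace.norm_eq]
  simp [sq]

lemma norm_toLp_mulVec_le {𝕜 l m : Type*} [RCLike 𝕜] [Fintype l] [Fintype m]
    (M : Matrix l m 𝕜) (x : m → 𝕜) : ‖toLp 2 (M *ᵥ x)‖ ≤ ‖M‖ * ‖toLp 2 x‖ := by
  rw [← frobenius_norm_replicateCol (ι := Unit), ← frobenius_norm_replicateCol (ι := Unit),
    replicateCol_mulVec]
  exact frobenius_norm_mul _ _

theorem norm_mul_sub_smul_sum_le_of_exact {n p k : ℕ} {V : Fin k → Matrix (Fin n) (Fin p) ℝ}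
    (horth : ∀ i j, finner (V i) (V j) = if i = j then 1 else 0) (Vhat : Matrix (Fin n) (Fin p) ℝ)
    {fA rA : Matrix (Fin n) (Fin n) ℝ} {fT rT : Matrix (Fin k) (Fin k) ℝ} (j : Fin k) {ε : ℝ}
    (hA : ‖fA - rA‖ ≤ ε) (hT : ‖fT - rT‖ ≤ ε)
    (hexact : rA * Vhat = ‖Vhat‖ • ∑ i, (rT *ᵥ Pi.single j 1) i • V i) :
    ‖fA * Vhat - ‖Vhat‖ • ∑ i, (fT *ᵥ Pi.single j 1) i • V i‖ ≤ 2 * ε * ‖Vhat‖ := by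
  set S := ∑ i, ((rT - fT) *ᵥ Pi.single j 1) i • V i
  have hsplit : fA * Vhat - ‖Vhat‖ • ∑ i, (fT *ᵥ Pi.single j 1) i • V i =
      (fA - rA) * Vhat + ‖Vhat‖ • S := by
    rw [Matrix.sub_mul, hexact]
    simp only [S, sub_mulVec, Pi.sub_apply, sub_smul, Finset.sum_sub_distrib, smul_sub]
    abel
  have hS : ‖S‖ ≤ ε :=
    calc ‖S‖ = ‖toLp 2 ((rT - fT) *ᵥ Pi.single j 1)‖ := norm_sum_smul_of_orthonormal horth _
      _ ≤ ‖rT - fT‖ * ‖toLp 2 (Pi.single j 1 : Fin k → ℝ)‖ := norm_toLp_mulVec_le _ _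
      _ = ‖fT - rT‖ := by simp [norm_sub_rev]
      _ ≤ ε := hT
  calc _ = ‖(fA - rA) * Vhat + ‖Vhat‖ • S‖ := by rw [hsplit]
    _ ≤ ‖fA - rA‖ * ‖Vhat‖ + ‖Vhat‖ * ‖S‖ := by
        refine (norm_add_le _ _).trans (add_le_add (frobenius_norm_mul _ _) ?_)
        rw [norm_smul, norm_norm]
    _ ≤ ε * ‖Vhat‖ + ‖Vhat‖ * ε := by gcongr
    _ = 2 * ε * ‖Vhat‖ := by ring

/-- error bound via rational approximation: under Crouzeix-type bounds
`‖f(A) − r(A)‖ ≤ C‖f − r‖_{L∞(Λ)}`, `‖f(T) − r(T)‖ ≤ C‖f − r‖_{L∞(Λ)}` for all rationals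
`r ∈ Π_{2m−1}/q_m`, together with exactness of the projection for such rationals and
F-orthonormality of the block columns, the approximation `f_{2m} = ‖V̂‖_F V(f(T)e₁ ⊗ I_p)`
satisfies `‖f(A)V̂ − f_{2m}‖_F ≤ 2C‖V̂‖_F · min_{r ∈ Π_{2m−1}/q_m} ‖f − r‖_{L∞(Λ)}`. -/
theorem error_bound_rational {n p m : ℕ} (hm : 0 < m)
    (A : Matrix (Fin n) (Fin n) ℝ) (ss : Fin m → ℝ)
    (T : Matrix (Fin (2 * m)) (Fin (2 * m)) ℝ)
    (V : Fin (2 * m) → Matrix (Fin n) (Fin p) ℝ)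
    (horth : ∀ i j, finner (V i) (V j) = if i = j then 1 else 0)
    (Vhat : Matrix (Fin n) (Fin p) ℝ)
    (Λ : Set ℝ)
    (f : ℝ → ℝ) (C : ℝ) (hC : 0 < C)
    (fA : Matrix (Fin n) (Fin n) ℝ)
    (fT : Matrix (Fin (2 * m)) (Fin (2 * m)) ℝ)
    -- Crouzeix-type bounds applied to `f - r` for every rational `r ∈ Π_{2m−1}/q_m`:
    (hCrouzeixA : ∀ pol : Polynomial ℝ, pol.natDegree ≤ 2 * m - 1 →
      fnorm (fA - Polynomial.aeval A pol * ((List.ofFn fun i : Fin m => A - ss i • 1).prod)⁻¹)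
        ≤ C * supErr Λ f ss pol)
    (hCrouzeixT : ∀ pol : Polynomial ℝ, pol.natDegree ≤ 2 * m - 1 →
      fnorm (fT - Polynomial.aeval T pol * ((List.ofFn fun i : Fin m => T - ss i • 1).prod)⁻¹)
        ≤ C * supErr Λ f ss pol)
    -- exactness for every rational `r ∈ Π_{2m−1}/q_m`:
    (hexact : ∀ pol : Polynomial ℝ, pol.natDegree ≤ 2 * m - 1 →
      Polynomial.aeval A pol * ((List.ofFn fun i : Fin m => A - ss i • 1).prod)⁻¹ * Vhat =
        fnorm Vhat •
          ∑ i, ((Polynomial.aeval T pol *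
              ((List.ofFn fun i : Fin m => T - ss i • 1).prod)⁻¹).mulVec
                (Pi.single ⟨0, by omega⟩ 1)) i • V i)
    (f2m : Matrix (Fin n) (Fin p) ℝ)
    (hf2m : f2m = fnorm Vhat • ∑ i, (fT.mulVec (Pi.single ⟨0, by omega⟩ 1)) i • V i) :
    fnorm (fA * Vhat - f2m) ≤
      2 * C * fnorm Vhat *
        ⨅ pol : { q : Polynomial ℝ // q.natDegree ≤ 2 * m - 1 }, supErr Λ f ss pol.1 := by
  subst hf2m
  simp only [fnorm_eq_norm] at hCrouzeixA hCrouzeixT hexact ⊢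
  have : Nonempty { q : Polynomial ℝ // q.natDegree ≤ 2 * m - 1 } := ⟨⟨0, by simp⟩⟩
  rw [Real.mul_iInf_of_nonneg (by positivity)]
  refine le_ciInf fun ⟨pol, hdeg⟩ => ?_
  exact (norm_mul_sub_smul_sum_le_of_exact horth Vhat _
    (hCrouzeixA pol hdeg) (hCrouzeixT pol hdeg) (hexact pol hdeg)).trans_eq (by ring)
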